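/- Let A be a left brace and let a ∈ A. (i) If a ⋆ a = 0, then the subbrace generated by a satisfies br(a) = ⟨a⟩ (the additive cyclic subgroup generated by a), and on br(a) the multiplication coincides with the addition. (ii) If a ∈ ζ(⋆,A), then ⟨a⟩ is an ideal of A. (iii) If a ∈ ζ₂(⋆,A), then br(a) = ⟨a⟩ + ⟨a ⋆ a⟩. -/

import Mathlib

/-!
Basic theory of left braces (skew left braces of abelian type), following
Dixon–Kurdachenko–Subbotin, "On the structure of braces whose subideals are ideals".
-/

universe u v

/-- A left brace: an abelian group `(A,+)`, a group `(A,·)`, satisfying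
`a(b+c) = ab + ac - a`.  (The additive and multiplicative identities then coincide.) -/
class LeftBrace (A : Type u) extends AddCommGroup A, Group A where
  mul_add_eq : ∀ a b c : A, a * (b + c) = a * b + a * c - a

namespace LeftBrace

variable {A : Type u} [LeftBrace A]

/-- The star operation `a ⋆ b = ab - a - b`. -/
def bstar (a b : A) : A := a * b - a - b

/-- A subset of a left brace is a subbrace if it is closed under the additive-group
and multiplicative-group operations (equivalently, it is a left brace under the
restricted operations). -/
structure IsSubbrace (S : Set A) : Prop where
  zero_mem : (0 : A) ∈ S
  add_mem : ∀ {a b : A}, a ∈ S → b ∈ S → a + b ∈ S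
  neg_mem : ∀ {a : A}, a ∈ S → -a ∈ S
  mul_mem : ∀ {a b : A}, a ∈ S → b ∈ S → a * b ∈ S
  inv_mem : ∀ {a : A}, a ∈ S → a⁻¹ ∈ S

/-- `I` is an ideal of the subbrace `J`: `I ⊆ J`, both are subbraces, and
`a ⋆ z, z ⋆ a ∈ I` for all `a ∈ J`, `z ∈ I`. -/
structure IsIdealIn (I J : Set A) : Prop where
  subset : I ⊆ J
  subbrace : IsSubbrace I
  ambient_subbrace : IsSubbrace J
  star_mem_left : ∀ a ∈ J, ∀ z ∈ I, bstar a z ∈ I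
  star_mem_right : ∀ a ∈ J, ∀ z ∈ I, bstar z a ∈ I

/-- `I` is an ideal of the brace `A`. -/
def IsIdeal (I : Set A) : Prop := IsIdealIn I (Set.univ : Set A)

/-- `A` is a T-brace if being an ideal is a transitive relation: an ideal of an
ideal of `A` is an ideal of `A`. -/
def IsTBrace (A : Type u) [LeftBrace A] : Prop :=
  ∀ I J : Set A, IsIdealIn I J → IsIdeal J → IsIdeal I

/-- The `⋆`-center `ζ(⋆,A) = {a | a ⋆ x = x ⋆ a = 0 for all x}`. -/
def starCenter (A : Type u) [LeftBrace A] : Set A :=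
  {a : A | ∀ x : A, bstar a x = 0 ∧ bstar x a = 0}

/-- The preimage in `A` of the `⋆`-center of the quotient of `A` by (the ideal) `S`:
`a` belongs to it iff `a ⋆ x ∈ S` and `x ⋆ a ∈ S` for every `x ∈ A`. -/
def nextCenter (A : Type u) [LeftBrace A] (S : Set A) : Set A :=
  {a : A | ∀ x : A, bstar a x ∈ S ∧ bstar x a ∈ S}

/-- The upper `⋆`-central series, indexed by naturals:
`ζ₀(⋆,A) = 0` and `ζ_{n+1}(⋆,A)/ζ_n(⋆,A) = ζ(⋆, A/ζ_n(⋆,A))`. -/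
def zetaNat (A : Type u) [LeftBrace A] : ℕ → Set A
  | 0 => ({0} : Set A)
  | n + 1 => nextCenter A (zetaNat A n)

/-- The upper `⋆`-central series, indexed by ordinals (unions at limit ordinals). -/
noncomputable def zetaOrd (A : Type u) [LeftBrace A] (o : Ordinal.{v}) : Set A :=
  Ordinal.limitRecOn o (({0} : Set A))
    (fun _ ih => nextCenter A ih)
    (fun o _ ih => ⋃ (o' : Ordinal) (h : o' < o), ih o' h)

/-- The upper `⋆`-hypercenter `ζ_∞(⋆,A)`: the final (stable) term of the upper
`⋆`-central series, i.e. the union of all its terms. -/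
noncomputable def starHypercenter (A : Type u) [LeftBrace A] : Set A :=
  ⋃ o : Ordinal.{u}, zetaOrd A o

/-- `A` is `⋆`-hypercentral if `A = ζ_γ(⋆,A)` for some ordinal `γ`. -/
def IsStarHypercentral (A : Type u) [LeftBrace A] : Prop :=
  ∃ γ : Ordinal.{u}, zetaOrd A γ = (Set.univ : Set A)

/-- `K ⋆ L`: the additive subgroup of `(A,+)` generated by all `x ⋆ y`, `x ∈ K`, `y ∈ L`. -/
def setStar (K L : Set A) : AddSubgroup A :=
  AddSubgroup.closure {z : A | ∃ x ∈ K, ∃ y ∈ L, z = bstar x y}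

/-- `rightStarSeries A n = A^{(n+1)}`, where `A^{(1)} = A` and `A^{(n+1)} = A^{(n)} ⋆ A`. -/
def rightStarSeries (A : Type u) [LeftBrace A] : ℕ → Set A
  | 0 => (Set.univ : Set A)
  | n + 1 => ((setStar (rightStarSeries A n) (Set.univ : Set A) : AddSubgroup A) : Set A)

/-- `leftStarSeries A n = A^{n+1}`, where `A^1 = A` and `A^{n+1} = A ⋆ A^n`. -/
def leftStarSeries (A : Type u) [LeftBrace A] : ℕ → Set A
  | 0 => (Set.univ : Set A)
  | n + 1 => ((setStar (Set.univ : Set A) (leftStarSeries A n) : AddSubgroup A) : Set A)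

/-- `A` is Smoktunowicz-nilpotent if `A^{(n)} = A^k = 0` for some naturals `n, k`. -/
def IsSmoktunowiczNilpotent (A : Type u) [LeftBrace A] : Prop :=
  ∃ n k : ℕ, rightStarSeries A n = ({0} : Set A) ∧ leftStarSeries A k = ({0} : Set A)

/-- The subbrace generated by a subset `M`: the intersection of all subbraces containing `M`. -/
def braceClosure (M : Set A) : Set A := ⋂₀ {S : Set A | IsSubbrace S ∧ M ⊆ S}

end LeftBrace

/-!
If `c = a ⋆ a` is `⋆`-central, then `a ⋆ (m a + n c) = m c`, and an induction on `m` gives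
`(m a + n c)(m' a + n' c) = (m + m') a + (n + n' + m m') c`. So the elements `m a + n c` form a
subbrace, which is then `br(a)`. Part (i) is the case `c = 0`, and (ii) holds because
`⋆`-central elements multiply as they add and have `c⁻¹ = -c`.
-/

namespace LeftBrace

variable {A : Type u} [LeftBrace A]

theorem one_eq_zero : (1 : A) = 0 := by
  simpa [eq_comm] using mul_add_eq (1 : A) 0 0

protected theorem zero_mul (a : A) : 0 * a = a := by
  rw [← one_eq_zero, one_mul]

protected theorem mul_zero (a : A) : a * 0 = a := by
  rw [← one_eq_zero, mul_one]

theorem mul_eq_add_add_bstar (a b : A) : a * b = a + b + bstar a b := by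
  unfold bstar; abel

theorem bstar_add (a b c : A) : bstar a (b + c) = bstar a b + bstar a c := by
  unfold bstar; rw [mul_add_eq]; abel

def bstarAddHom (a : A) : A →+ A := AddMonoidHom.mk' (bstar a) (bstar_add a)

theorem bstar_zsmul (a b : A) (n : ℤ) : bstar a (n • b) = n • bstar a b :=
  map_zsmul (bstarAddHom a) n b

theorem mem_starCenter_iff {c : A} :
    c ∈ starCenter A ↔ ∀ x, c * x = c + x ∧ x * c = x + c := by
  simp only [starCenter, Set.mem_ofPred_eq, bstar, sub_sub, sub_eq_zero]

theorem mul_eq_add_of_mem_starCenter {c : A} (hc : c ∈ starCenter A) (x : A) : c * x = c + x :=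
  (mem_starCenter_iff.1 hc x).1

theorem mul_eq_add_of_mem_starCenter' {c : A} (hc : c ∈ starCenter A) (x : A) : x * c = x + c :=
  (mem_starCenter_iff.1 hc x).2

theorem inv_eq_neg_of_mem_starCenter {c : A} (hc : c ∈ starCenter A) : c⁻¹ = -c :=
  inv_eq_of_mul_eq_one_right <| by
    rw [mul_eq_add_of_mem_starCenter hc, add_neg_cancel, one_eq_zero]

variable (A) in
def starCenterAddSubgroup : AddSubgroup A where
  carrier := starCenter A
  zero_mem' := mem_starCenter_iff.2 fun x =>
    ⟨by rw [LeftBrace.zero_mul, zero_add], by rw [LeftBrace.mul_zero, add_zero]⟩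
  add_mem' {c d} hc hd := by
    refine mem_starCenter_iff.2 fun x => ⟨?_, ?_⟩
    · rw [← mul_eq_add_of_mem_starCenter hc d, mul_assoc, mul_eq_add_of_mem_starCenter hc,
        mul_eq_add_of_mem_starCenter hd, mul_eq_add_of_mem_starCenter hc d, add_assoc]
    · rw [mul_add_eq, mul_eq_add_of_mem_starCenter' hc, mul_eq_add_of_mem_starCenter' hd]
      abel
  neg_mem' {c} hc := by
    have hinv := inv_eq_neg_of_mem_starCenter hc
    refine mem_starCenter_iff.2 fun x =>
      ⟨mul_left_cancel (a := c) ?_, mul_right_cancel (b := c) ?_⟩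
    · rw [← hinv, mul_inv_cancel_left, mul_eq_add_of_mem_starCenter hc, hinv,
        add_neg_cancel_left]
    · rw [← hinv, inv_mul_cancel_right, mul_eq_add_of_mem_starCenter' hc, hinv,
        neg_add_cancel_right]

theorem isIdeal_of_le_starCenterAddSubgroup {H : AddSubgroup A}
    (hH : H ≤ starCenterAddSubgroup A) : IsIdeal (H : Set A) where
  subset := Set.subset_univ _
  subbrace :=
    { zero_mem := H.zero_mem
      add_mem := H.add_mem
      neg_mem := H.neg_mem
      mul_mem := fun hx hy => by
        rw [mul_eq_add_of_mem_starCenter (hH hx)]; exact H.add_mem hx hy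
      inv_mem := fun hx => by
        rw [inv_eq_neg_of_mem_starCenter (hH hx)]; exact H.neg_mem hx }
  ambient_subbrace := ⟨trivial, fun _ _ => trivial, fun _ => trivial, fun _ _ => trivial,
    fun _ => trivial⟩
  star_mem_left _ _ _ hz := by rw [(hH hz _).2]; exact H.zero_mem
  star_mem_right _ _ _ hz := by rw [(hH hz _).1]; exact H.zero_mem

def IsSubbrace.toAddSubgroup {S : Set A} (hS : IsSubbrace S) : AddSubgroup A where
  carrier := S
  zero_mem' := hS.zero_mem
  add_mem' := hS.add_mem
  neg_mem' := hS.neg_mem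

theorem IsSubbrace.bstar_mem {S : Set A} (hS : IsSubbrace S) {a b : A} (ha : a ∈ S)
    (hb : b ∈ S) : bstar a b ∈ S :=
  hS.toAddSubgroup.sub_mem (hS.toAddSubgroup.sub_mem (hS.mul_mem ha hb) ha) hb

theorem braceClosure_subset {M S : Set A} (hS : IsSubbrace S) (hM : M ⊆ S) :
    braceClosure M ⊆ S :=
  Set.sInter_subset_of_mem ⟨hS, hM⟩

theorem mem_braceClosure {M : Set A} {x : A} :
    x ∈ braceClosure M ↔ ∀ S, IsSubbrace S → M ⊆ S → x ∈ S := by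
  simp [braceClosure, and_imp]

section BstarSelfCentral

variable {a : A}

theorem mul_zsmul_add_zsmul_bstar_self (hc : bstar a a ∈ starCenter A) (m n : ℤ) :
    a * (m • a + n • bstar a a) = (m + 1) • a + (m + n) • bstar a a := by
  rw [mul_eq_add_add_bstar, bstar_add, bstar_zsmul, bstar_zsmul, (hc a).2]
  module

theorem inv_mul_zsmul_add_zsmul_bstar_self (hc : bstar a a ∈ starCenter A) (m n : ℤ) :
    a⁻¹ * (m • a + n • bstar a a) = (m - 1) • a + (n - m + 1) • bstar a a :=
  inv_mul_eq_of_eq_mul <| by rw [mul_zsmul_add_zsmul_bstar_self hc]; module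

theorem zsmul_add_zsmul_bstar_self_mul (hc : bstar a a ∈ starCenter A) (m n m' n' : ℤ) :
    (m • a + n • bstar a a) * (m' • a + n' • bstar a a) =
      (m + m') • a + (n + n' + m * m') • bstar a a := by
  induction m using Int.induction_on generalizing n with
  | zero =>
    rw [zero_zsmul, zero_add,
      mul_eq_add_of_mem_starCenter ((starCenterAddSubgroup A).zsmul_mem hc n)]
    module
  | succ k ih =>
    have hk : ((k : ℤ) + 1) • a + n • bstar a a =
        a * ((k : ℤ) • a + (n - k) • bstar a a) := by
      rw [mul_zsmul_add_zsmul_bstar_self hc]; module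
    rw [hk, mul_assoc, ih, mul_zsmul_add_zsmul_bstar_self hc]
    module
  | pred k ih =>
    have hk : (-(k : ℤ) - 1) • a + n • bstar a a =
        a⁻¹ * (-(k : ℤ) • a + (n - k - 1) • bstar a a) := by
      rw [inv_mul_zsmul_add_zsmul_bstar_self hc]; module
    rw [hk, mul_assoc, ih, inv_mul_zsmul_add_zsmul_bstar_self hc]
    module

theorem isSubbrace_zsmul_add_zsmul_bstar_self (hc : bstar a a ∈ starCenter A) :
    IsSubbrace {x : A | ∃ m n : ℤ, x = m • a + n • bstar a a} where
  zero_mem := ⟨0, 0, by module⟩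
  add_mem := by
    rintro _ _ ⟨m, n, rfl⟩ ⟨m', n', rfl⟩
    exact ⟨m + m', n + n', by module⟩
  neg_mem := by
    rintro _ ⟨m, n, rfl⟩
    exact ⟨-m, -n, by module⟩
  mul_mem := by
    rintro _ _ ⟨m, n, rfl⟩ ⟨m', n', rfl⟩
    exact ⟨_, _, zsmul_add_zsmul_bstar_self_mul hc m n m' n'⟩
  inv_mem := by
    rintro _ ⟨m, n, rfl⟩
    refine ⟨-m, m * m - n, inv_eq_of_mul_eq_one_right ?_⟩
    rw [zsmul_add_zsmul_bstar_self_mul hc, one_eq_zero]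
    module

theorem braceClosure_singleton_of_bstar_self_mem_starCenter (hc : bstar a a ∈ starCenter A) :
    braceClosure {a} = {x : A | ∃ m n : ℤ, x = m • a + n • bstar a a} := by
  refine (braceClosure_subset (isSubbrace_zsmul_add_zsmul_bstar_self hc)
    (Set.singleton_subset_iff.2 ⟨1, 0, by module⟩)).antisymm ?_
  rintro _ ⟨m, n, rfl⟩
  refine mem_braceClosure.2 fun S hS haS => ?_
  have ha : a ∈ S := haS rfl
  exact hS.toAddSubgroup.add_mem (hS.toAddSubgroup.zsmul_mem ha m)
    (hS.toAddSubgroup.zsmul_mem (hS.bstar_mem ha ha) n)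

end BstarSelfCentral

theorem bstar_self_mem_starCenter_of_mem_zetaNat_two {a : A} (ha : a ∈ zetaNat A 2) :
    bstar a a ∈ starCenter A :=
  (ha a).1

end LeftBrace

open LeftBrace in
/-- **Lemma (extra1).** Let `A` be a left brace, `a ∈ A`.
(i) If `a ⋆ a = 0` then `br(a) = ⟨a⟩` and multiplication coincides with addition on `br(a)`;
(ii) if `a ∈ ζ(⋆,A)` then `⟨a⟩` is an ideal of `A`;
(iii) if `a ∈ ζ₂(⋆,A)` then `br(a) = ⟨a⟩ + ⟨a ⋆ a⟩`. -/
theorem braceClosure_singleton_eq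
    {A : Type u} [LeftBrace A] (a : A) :
    (bstar a a = 0 →
      braceClosure {a} = ((AddSubgroup.zmultiples a : AddSubgroup A) : Set A) ∧
      ∀ x ∈ braceClosure {a}, ∀ y ∈ braceClosure {a}, x * y = x + y) ∧
    (a ∈ starCenter A →
      IsIdeal ((AddSubgroup.zmultiples a : AddSubgroup A) : Set A)) ∧
    (a ∈ zetaNat A 2 →
      braceClosure {a} = {x : A | ∃ m n : ℤ, x = m • a + n • bstar a a}) := by
  refine ⟨fun h => ?_, fun ha => isIdeal_of_le_starCenterAddSubgroup
      (AddSubgroup.zmultiples_le_of_mem ha),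
    fun ha => braceClosure_singleton_of_bstar_self_mem_starCenter
      (bstar_self_mem_starCenter_of_mem_zetaNat_two ha)⟩
  have hc : bstar a a ∈ starCenter A := h ▸ (starCenterAddSubgroup A).zero_mem
  have hcl : braceClosure {a} = {x : A | ∃ m : ℤ, x = m • a} := by
    simpa only [h, zsmul_zero, add_zero, exists_const] using
      braceClosure_singleton_of_bstar_self_mem_starCenter hc
  refine ⟨hcl.trans ?_, ?_⟩
  · ext x
    simp [AddSubgroup.mem_zmultiples_iff, eq_comm]
  · rw [hcl]
    rintro _ ⟨m, rfl⟩ _ ⟨m', rfl⟩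
    simpa [h, add_zsmul] using zsmul_add_zsmul_bstar_self_mul hc m 0 m' 0
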